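/- Let (ℱ, v) be unitary in x (v(t) = λ ≠ 0 for all t ∈ ℱ_x), let P be a triangulation point of G(ℱ_x), Q_2 a leaf at P with Q_2 ∉ {x−2, x+2}, and Q_1, Q_3 the previous and next leaves at P (or the adjacent triangulation points if no such leaves exist). Then v({P,Q_1,Q_3}) = v({P,Q_1,Q_2}) + v({P,Q_2,Q_3}). -/

import Mathlib

open Finset

/-- `(a,b,c)` is cyclically ordered in `Fin n`. -/
def Cyc {n : ℕ} (a b c : Fin n) : Prop :=
  (a < b ∧ b < c) ∨ (b < c ∧ c < a) ∨ (c < a ∧ a < b)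

/-- `a <_x b` iff `(x,a,b)` is cyclically ordered. -/
def Ltx {n : ℕ} (x a b : Fin n) : Prop := Cyc x a b

/-- `a ≤_x b`. -/
def Leqx {n : ℕ} (x a b : Fin n) : Prop := Ltx x a b ∨ a = b

/-- Two subsets `A`, `B` of `Fin n` are crossing. -/
def Crossing {n : ℕ} (A B : Finset (Fin n)) : Prop :=
  ∃ a ∈ A \ B, ∃ c ∈ A \ B, ∃ b ∈ B \ A, ∃ d ∈ B \ A, Cyc a b c ∧ Cyc b c d

/-- `F` is a maximal weakly separated family of triangles in `Fin n`. -/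
def MaxWS {n : ℕ} (F : Finset (Finset (Fin n))) : Prop :=
  (∀ t ∈ F, t.card = 3) ∧
  (∀ s ∈ F, ∀ t ∈ F, ¬ Crossing s t) ∧
  (∀ t : Finset (Fin n), t.card = 3 →
    (∀ s ∈ F, ¬ Crossing t s ∧ ¬ Crossing s t) → t ∈ F)

/-- The subfamily of triangles of `F` containing `x`. -/
def Fx {n : ℕ} (F : Finset (Finset (Fin n))) (x : Fin n) : Finset (Finset (Fin n)) :=
  F.filter (fun t => x ∈ t)

/-- Degree of `a` in the graph `G(F_x)`: the number of triangles of `F`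
containing both `x` and `a`. -/
def degx {n : ℕ} (F : Finset (Finset (Fin n))) (x a : Fin n) : ℕ :=
  ((Fx F x).filter (fun t => a ∈ t)).card

/-- `a` is a vertex of the graph `G(F_x)`. -/
def IsVertex {n : ℕ} (F : Finset (Finset (Fin n))) (x a : Fin n) : Prop :=
  a ≠ x ∧ 1 ≤ degx F x a

/-- `a` is a triangulation point of `G(F_x)`: a vertex of degree at least 2. -/
def IsTriPoint {n : ℕ} (F : Finset (Finset (Fin n))) (x a : Fin n) : Prop :=
  a ≠ x ∧ 2 ≤ degx F x a

/-- `a` is a leaf of `G(F_x)` attached to `b`. -/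
def IsLeafAt {n : ℕ} (F : Finset (Finset (Fin n))) (x a b : Fin n) : Prop :=
  a ≠ x ∧ degx F x a = 1 ∧ ({x, b, a} : Finset (Fin n)) ∈ F

/-- A graph with vertex set `V ⊆ Fin n` (in the induced cyclic order) and edge
set `E` is a triangulation of a polygon: equivalently (as noted in the paper),
`E` is a maximal family of pairwise non-crossing 2-subsets of `V`. -/
def IsPolygonTriangulation {n : ℕ} (V : Set (Fin n)) (E : Set (Finset (Fin n))) : Prop :=
  (∀ e ∈ E, e.card = 2 ∧ ↑e ⊆ V) ∧
  (∀ e ∈ E, ∀ f ∈ E, ¬ Crossing e f) ∧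
  (∀ e : Finset (Fin n), e.card = 2 → ↑e ⊆ V →
    (∀ f ∈ E, ¬ Crossing e f ∧ ¬ Crossing f e) → e ∈ E)

/-- The Plücker ideal: alternating relations together with the Plücker relations. -/
noncomputable def plueckerIdeal (n : ℕ) : Ideal (MvPolynomial (Fin 3 → Fin n) ℂ) :=
  Ideal.span { p | (∃ (f : Fin 3 → Fin n) (σ : Equiv.Perm (Fin 3)),
      p = MvPolynomial.X (f ∘ σ) - ((Equiv.Perm.sign σ : ℤˣ) : ℤ) • MvPolynomial.X f) ∨
    (∃ (g : Fin 2 → Fin n) (h : Fin 4 → Fin n),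
      p = ∑ l : Fin 4, (-1 : MvPolynomial (Fin 3 → Fin n) ℂ) ^ (l : ℕ) *
        MvPolynomial.X ![g 0, g 1, h l] * MvPolynomial.X (h ∘ l.succAbove)) }

/-- The homogeneous coordinate ring `ℂ[G(3,n)]` of the Grassmannian. -/
abbrev GrassRing (n : ℕ) := MvPolynomial (Fin 3 → Fin n) ℂ ⧸ plueckerIdeal n

/-- The Plücker coordinate `Δ^{ijk}`. -/
noncomputable def Pl {n : ℕ} (i j k : Fin n) : GrassRing n :=
  Ideal.Quotient.mk _ (MvPolynomial.X ![i, j, k])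

/-- Median of three elements of `Fin n`. -/
def mid3 {n : ℕ} (i j k : Fin n) : Fin n := max (min i j) (min (max i j) k)

/-- The Plücker coordinate `Δ^{o(i,j,k)}` with the indices ordered increasingly. -/
noncomputable def Plo {n : ℕ} (i j k : Fin n) : GrassRing n :=
  Pl (min i (min j k)) (mid3 i j k) (max i (max j k))

open Fin.NatCast in
/-- `Δ_k(i) = v(Δ at {i, i+1, i+k+2})`. -/
noncomputable def Dlow {n : ℕ} [NeZero n] (v : GrassRing n →ₐ[ℂ] ℂ) (k : ℕ) (i : Fin n) : ℂ :=
  v (Plo i (i + 1) (i + ((k + 2 : ℕ) : Fin n)))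

open Fin.NatCast in
/-- `Δ^k(i) = v(Δ at {i, i+k+1, i+k+2})`. -/
noncomputable def Dup {n : ℕ} [NeZero n] (v : GrassRing n →ₐ[ℂ] ℂ) (k : ℕ) (i : Fin n) : ℂ :=
  v (Plo i (i + ((k + 1 : ℕ) : Fin n)) (i + ((k + 2 : ℕ) : Fin n)))

/-!
Apply `v` to the three-term Plücker relation
`Δ^{P x Q₂} Δ^{P Q₁ Q₃} = Δ^{P x Q₁} Δ^{P Q₂ Q₃} + Δ^{P x Q₃} Δ^{P Q₁ Q₂}`.
Because `x, Q₁, Q₂, Q₃` are cyclically ordered and `P` is distinct from all of them, the sign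
changes from reordering the indices of the coordinates `Δ^{o(⋯)}` cancel. The three triangles
`{x, P, Qᵢ}` lie in `ℱ_x`, so every factor containing `x` evaluates to `λ`; dividing by `λ ≠ 0`
gives the claim.
-/

section Plucker

variable {n : ℕ}

lemma pl_eq_sign_smul (i j k : Fin n) (σ : Equiv.Perm (Fin 3)) {i' j' k' : Fin n}
    (h : ![i', j', k'] = ![i, j, k] ∘ σ) :
    Pl i' j' k' = ((Equiv.Perm.sign σ : ℤˣ) : ℤ) • Pl i j k := by
  have hmem : MvPolynomial.X (![i, j, k] ∘ σ) -
      ((Equiv.Perm.sign σ : ℤˣ) : ℤ) • MvPolynomial.X ![i, j, k] ∈ plueckerIdeal n :=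
    Ideal.subset_span (Or.inl ⟨_, σ, rfl⟩)
  rw [Pl, Pl, h, ← sub_eq_zero, ← map_zsmul, ← map_sub]
  exact Ideal.Quotient.eq_zero_iff_mem.2 hmem

lemma pl_swap_left (i j k : Fin n) : Pl j i k = -Pl i j k := by
  rw [pl_eq_sign_smul i j k (Equiv.swap 0 1) (by ext l; fin_cases l <;> rfl)]
  simp [show Equiv.Perm.sign (Equiv.swap (0 : Fin 3) 1) = -1 by decide]

lemma pl_swap_right (i j k : Fin n) : Pl i k j = -Pl i j k := by
  rw [pl_eq_sign_smul i j k (Equiv.swap 1 2) (by ext l; fin_cases l <;> rfl)]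
  simp [show Equiv.Perm.sign (Equiv.swap (1 : Fin 3) 2) = -1 by decide]

lemma pl_rotate (i j k : Fin n) : Pl j k i = Pl i j k := by
  rw [pl_swap_right, pl_swap_left, neg_neg]

lemma pl_self_left_right (i j : Fin n) : Pl i j i = 0 := by
  have h : Pl i j i = -Pl i j i := by
    nth_rw 1 [pl_eq_sign_smul i j i (Equiv.swap 0 2) (by ext l; fin_cases l <;> rfl)]
    simp [show Equiv.Perm.sign (Equiv.swap (0 : Fin 3) 2) = -1 by decide]
  have h2 : (2 : ℂ) • Pl i j i = 0 := by rw [two_smul]; nth_rw 1 [h]; exact neg_add_cancel _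
  exact (smul_eq_zero.mp h2).resolve_left two_ne_zero

lemma pl_plucker (p a b c d : Fin n) :
    Pl p a c * Pl p b d = Pl p a b * Pl p c d + Pl p a d * Pl p b c := by
  have hmem : (∑ l : Fin 4, (-1 : MvPolynomial (Fin 3 → Fin n) ℂ) ^ (l : ℕ) *
      MvPolynomial.X ![p, a, ![p, b, c, d] l] * MvPolynomial.X (![p, b, c, d] ∘ l.succAbove))
      ∈ plueckerIdeal n := Ideal.subset_span (Or.inr ⟨![p, a], ![p, b, c, d], rfl⟩)
  have h := Ideal.Quotient.eq_zero_iff_mem.2 hmem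
  rw [Fin.sum_univ_four,
    show ![p, b, c, d] ∘ (0 : Fin 4).succAbove = ![b, c, d] by ext l; fin_cases l <;> rfl,
    show ![p, b, c, d] ∘ (1 : Fin 4).succAbove = ![p, c, d] by ext l; fin_cases l <;> rfl,
    show ![p, b, c, d] ∘ (2 : Fin 4).succAbove = ![p, b, d] by ext l; fin_cases l <;> rfl,
    show ![p, b, c, d] ∘ (3 : Fin 4).succAbove = ![p, b, c] by ext l; fin_cases l <;> rfl] at h
  simp only [map_add, map_mul, map_pow, map_neg, map_one] at h
  change (-1) ^ 0 * Pl p a p * Pl b c d + (-1) ^ 1 * Pl p a b * Pl p c d +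
    (-1) ^ 2 * Pl p a c * Pl p b d + (-1) ^ 3 * Pl p a d * Pl p b c = 0 at h
  rw [pl_self_left_right] at h
  linear_combination h

lemma cyc_asymm {a b c : Fin n} (h : Cyc a b c) : ¬ Cyc c b a := by
  unfold Cyc at *; omega

lemma cyc_trans {p a b c : Fin n} (hab : Cyc p a b) (hbc : Cyc p b c) : Cyc p a c := by
  unfold Cyc at *; omega

lemma cyc_arc_cases {p a b c : Fin n} (h : Cyc a b c) (hpa : p ≠ a) (hpb : p ≠ b) (hpc : p ≠ c) :
    Cyc a p b ∨ Cyc b p c ∨ Cyc c p a := by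
  unfold Cyc; rcases h with h | h | h <;> omega

lemma mid3_swap_left (a b c : Fin n) : mid3 b a c = mid3 a b c := by
  simp only [mid3, Fin.ext_iff, Fin.coe_min, Fin.coe_max]; omega

lemma mid3_swap_right (a b c : Fin n) : mid3 a c b = mid3 a b c := by
  simp only [mid3, Fin.ext_iff, Fin.coe_min, Fin.coe_max]; omega

lemma plo_of_le {a b c : Fin n} (hab : a ≤ b) (hbc : b ≤ c) : Plo a b c = Pl a b c := by
  have h1 : min a (min b c) = a := by simp only [Fin.ext_iff, Fin.coe_min]; omega
  have h2 : mid3 a b c = b := by simp only [mid3, Fin.ext_iff, Fin.coe_min, Fin.coe_max]; omega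
  have h3 : max a (max b c) = c := by simp only [Fin.ext_iff, Fin.coe_max]; omega
  rw [Plo, h1, h2, h3]

lemma plo_swap_left (a b c : Fin n) : Plo b a c = Plo a b c := by
  rw [Plo, Plo, min_left_comm, max_left_comm, mid3_swap_left]

lemma plo_swap_right (a b c : Fin n) : Plo a c b = Plo a b c := by
  rw [Plo, Plo, min_comm c, max_comm c, mid3_swap_right]

lemma plo_of_cyc {a b c : Fin n} (h : Cyc a b c) : Plo a b c = Pl a b c := by
  rcases h with ⟨hab, hbc⟩ | ⟨hbc, hca⟩ | ⟨hca, hab⟩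
  · exact plo_of_le hab.le hbc.le
  · rw [← plo_swap_left, plo_swap_right, plo_of_le hbc.le hca.le, pl_rotate]
  · rw [← plo_swap_right, plo_swap_left, plo_of_le hca.le hab.le, ← pl_rotate]

variable {p a b c d : Fin n}

lemma plo_plucker_of_cyc (hab : Cyc p a b) (hbc : Cyc p b c) (hcd : Cyc p c d) :
    Plo p a c * Plo p b d = Plo p a b * Plo p c d + Plo p a d * Plo p b c := by
  have hac := cyc_trans hab hbc
  have hbd := cyc_trans hbc hcd
  have had := cyc_trans hac hcd
  rw [plo_of_cyc hab, plo_of_cyc hbc, plo_of_cyc hcd, plo_of_cyc hac, plo_of_cyc hbd,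
    plo_of_cyc had]
  exact pl_plucker p a b c d

lemma plo_plucker_of_rotate
    (h : Plo p b d * Plo p c a = Plo p b c * Plo p d a + Plo p b a * Plo p c d) :
    Plo p a c * Plo p b d = Plo p a b * Plo p c d + Plo p a d * Plo p b c := by
  rw [plo_swap_right p a c, plo_swap_right p a d, plo_swap_right p a b] at h
  linear_combination h

lemma plo_plucker (hpa : p ≠ a) (hpb : p ≠ b) (hpc : p ≠ c) (hpd : p ≠ d)
    (habc : Cyc a b c) (hacd : Cyc a c d) :
    Plo p a c * Plo p b d = Plo p a b * Plo p c d + Plo p a d * Plo p b c := by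
  -- rotate `(a, b, c, d)` until `p` lies on the arc from `d` to `a`
  rcases cyc_arc_cases habc hpa hpb hpc with h | h | h
  · exact plo_plucker_of_rotate <|
      plo_plucker_of_cyc (by unfold Cyc at *; omega) (by unfold Cyc at *; omega)
        (by unfold Cyc at *; omega)
  · exact plo_plucker_of_rotate <| plo_plucker_of_rotate <|
      plo_plucker_of_cyc (by unfold Cyc at *; omega) (by unfold Cyc at *; omega)
        (by unfold Cyc at *; omega)
  · rcases cyc_arc_cases hacd hpa hpc hpd with h' | h' | h'
    · exact absurd h (cyc_asymm h')
    · exact plo_plucker_of_rotate <| plo_plucker_of_rotate <| plo_plucker_of_rotate <|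
        plo_plucker_of_cyc (by unfold Cyc at *; omega) (by unfold Cyc at *; omega)
          (by unfold Cyc at *; omega)
    · exact plo_plucker_of_cyc (by unfold Cyc at *; omega) (by unfold Cyc at *; omega)
        (by unfold Cyc at *; omega)

end Plucker

lemma Finset.ne_of_card_eq_three {α : Type*} [DecidableEq α] {a b c : α}
    (h : ({a, b, c} : Finset α).card = 3) : a ≠ b ∧ a ≠ c ∧ b ≠ c := by
  refine ⟨?_, ?_, ?_⟩ <;> rintro rfl <;>
    simp only [insert_eq_of_mem, mem_insert_self, mem_insert_of_mem, mem_singleton_self] at h <;>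
    exact (card_le_two.trans_lt (by norm_num)).ne h

theorem removing_leaves_general {n : ℕ} (F : Finset (Finset (Fin n)))
    (x : Fin n) (hF : MaxWS F)
    (v : GrassRing n →ₐ[ℂ] ℂ) (lam : ℂ) (hlam : lam ≠ 0)
    (hunit : ∀ a b c : Fin n, ({a, b, c} : Finset (Fin n)) ∈ Fx F x →
      v (Plo a b c) = lam)
    (P Q1 Q2 Q3 : Fin n)
    (hQ2 : IsLeafAt F x Q2 P)
    (hQ1 : ({x, P, Q1} : Finset (Fin n)) ∈ F ∧ Ltx x Q1 Q2 ∧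
      ∀ R : Fin n, ({x, P, R} : Finset (Fin n)) ∈ F → Ltx x Q1 R → ¬ Ltx x R Q2)
    (hQ3 : ({x, P, Q3} : Finset (Fin n)) ∈ F ∧ Ltx x Q2 Q3 ∧
      ∀ R : Fin n, ({x, P, R} : Finset (Fin n)) ∈ F → Ltx x Q2 R → ¬ Ltx x R Q3) :
    v (Plo P Q1 Q3) = v (Plo P Q1 Q2) + v (Plo P Q2 Q3) := by
  obtain ⟨h1F, hxQ1Q2, -⟩ := hQ1
  obtain ⟨h3F, hxQ2Q3, -⟩ := hQ3
  have h2F := hQ2.2.2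
  obtain ⟨hxP, -, hPQ1⟩ := Finset.ne_of_card_eq_three (hF.1 _ h1F)
  obtain ⟨-, -, hPQ2⟩ := Finset.ne_of_card_eq_three (hF.1 _ h2F)
  obtain ⟨-, -, hPQ3⟩ := Finset.ne_of_card_eq_three (hF.1 _ h3F)
  have hval {Q : Fin n} (hQ : {x, P, Q} ∈ F) : v (Plo P x Q) = lam := by
    rw [plo_swap_left]
    exact hunit x P Q (mem_filter.2 ⟨hQ, mem_insert_self _ _⟩)
  have key := congrArg v (plo_plucker hxP.symm hPQ1 hPQ2 hPQ3 hxQ1Q2 hxQ2Q3)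
  rw [map_mul, map_add, map_mul, map_mul, hval h1F, hval h2F, hval h3F] at key
  exact mul_left_cancel₀ hlam (by linear_combination key)

/-- Removing leaves: if `(F, v)` is unitary in `x`, `P` is a triangulation
point, `Q2` a leaf at `P` with `Q2 ∉ {x-2, x+2}`, and `Q1`, `Q3` the previous
and next neighbours of `P` (previous/next leaves, or the adjacent
triangulation points if no such leaves exist), then
`v({P,Q1,Q3}) = v({P,Q1,Q2}) + v({P,Q2,Q3})`. -/
theorem removing_leaves {n : ℕ} [NeZero n] (F : Finset (Finset (Fin n)))
    (x : Fin n) (hF : MaxWS F)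
    (v : GrassRing n →ₐ[ℂ] ℂ) (lam : ℂ) (hlam : lam ≠ 0)
    (hunit : ∀ a b c : Fin n, ({a, b, c} : Finset (Fin n)) ∈ Fx F x →
      v (Plo a b c) = lam)
    (P Q1 Q2 Q3 : Fin n)
    (hP : IsTriPoint F x P)
    (hQ2 : IsLeafAt F x Q2 P)
    (hQ2x : Q2 ≠ x - 2 ∧ Q2 ≠ x + 2)
    (hQ1 : ({x, P, Q1} : Finset (Fin n)) ∈ F ∧ Ltx x Q1 Q2 ∧
      ∀ R : Fin n, ({x, P, R} : Finset (Fin n)) ∈ F → Ltx x Q1 R → ¬ Ltx x R Q2)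
    (hQ3 : ({x, P, Q3} : Finset (Fin n)) ∈ F ∧ Ltx x Q2 Q3 ∧
      ∀ R : Fin n, ({x, P, R} : Finset (Fin n)) ∈ F → Ltx x Q2 R → ¬ Ltx x R Q3) :
    v (Plo P Q1 Q3) = v (Plo P Q1 Q2) + v (Plo P Q2 Q3) :=
  removing_leaves_general F x hF v lam hlam hunit P Q1 Q2 Q3 hQ2 hQ1 hQ3
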